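/- For every J ∈ ℝ³, the Bowen–York angular-momentum field S^J(x)_{ab} = (3/‖x‖⁵)·(xₐ(J×x)_b + x_b(J×x)ₐ) on ℝ³∖{0} is a smooth solution of the Euclidean momentum constraint: for every x ≠ 0 the matrix S^J(x) is symmetric, has vanishing trace Σₐ S^J(x)_{aa} = 0, and is divergence-free, i.e. Σₐ ∂ₐ S^J(x)_{ab} = 0 for each b ∈ {1,2,3}. -/

import Mathlib

/-- The cross product `J × x` of two vectors of `ℝ³`, componentwise. -/
def crossVec (J x : EuclideanSpace ℝ (Fin 3)) : Fin 3 → ℝ :=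
  ![J 1 * x 2 - J 2 * x 1, J 2 * x 0 - J 0 * x 2, J 0 * x 1 - J 1 * x 0]

/-- The Bowen–York angular-momentum tensor
`S^J(x)_{ab} = (3/‖x‖⁵)(xₐ (J×x)_b + x_b (J×x)ₐ)`. -/
noncomputable def bowenYorkJ (J x : EuclideanSpace ℝ (Fin 3)) (a b : Fin 3) : ℝ :=
  (3 / ‖x‖ ^ 5) * (x a * crossVec J x b + x b * crossVec J x a)

/-!
For a skew-symmetric linear map `L` of `ℝⁿ` put
`T(x)_{ab} = ‖x‖^{-(n+2)} (xₐ (Lx)_b + x_b (Lx)ₐ)`; the Bowen–York field is `S^J = 3 T` for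
`L = J × ·` and `n = 3`. Symmetry is clear and the trace is `2 ‖x‖^{-(n+2)} ⟪x, Lx⟫ = 0`.
For the divergence, `Σₐ ∂ₐ` of the bracket is `n (Lx)_b + (Lx)_b + (Lx)_b + x_b tr L = (n+2) (Lx)_b`
(linearity of `L` and `tr L = 0`), while differentiating `‖x‖^{-(n+2)}` contributes
`-(n+2) ‖x‖^{-(n+4)} Σₐ xₐ (xₐ (Lx)_b + x_b (Lx)ₐ) = -(n+2) ‖x‖^{-(n+2)} (Lx)_b`.
-/

open scoped RealInnerProductSpace
open EuclideanSpace Finset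

section InnerProductSpace

variable {E : Type*} [NormedAddCommGroup E] [InnerProductSpace ℝ E]

theorem hasFDerivAt_norm_of_ne_zero {x : E} (hx : x ≠ 0) :
    HasFDerivAt (fun y : E => ‖y‖) (‖x‖⁻¹ • innerSL ℝ x) x := by
  have := (hasStrictFDerivAt_norm_sq x).hasFDerivAt.sqrt (by positivity)
  simp only [Real.sqrt_sq (norm_nonneg _)] at this
  refine this.congr_fderiv ?_
  ext v
  simp only [one_div, mul_inv_rev, smul_apply, coe_innerSL_apply, nsmul_eq_mul, Nat.cast_ofNat,
    smul_eq_mul]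
  field_simp

theorem hasFDerivAt_inv_norm_pow (k : ℕ) {x : E} (hx : x ≠ 0) :
    HasFDerivAt (fun y : E => (‖y‖ ^ k)⁻¹) ((-(k : ℝ) * (‖x‖ ^ (k + 2))⁻¹) • innerSL ℝ x) x := by
  have hr : ‖x‖ ≠ 0 := norm_ne_zero_iff.mpr hx
  refine ((hasDerivAt_inv (pow_ne_zero k hr)).comp_hasFDerivAt x
    ((hasDerivAt_pow k ‖x‖).comp_hasFDerivAt x (hasFDerivAt_norm_of_ne_zero hx))).congr_fderiv ?_
  rw [smul_smul, smul_smul]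
  congr 1
  rcases k with _ | m
  · simp
  · simp only [Nat.add_sub_cancel]
    field_simp
    ring

end InnerProductSpace

namespace EuclideanSpace

variable {n : ℕ}

theorem sum_mul_eq_inner (x y : EuclideanSpace ℝ (Fin n)) : ∑ a, x a * y a = ⟪x, y⟫ := by
  simp [PiLp.inner_apply, mul_comm]

theorem sum_mul_apply_single (L : EuclideanSpace ℝ (Fin n) →L[ℝ] EuclideanSpace ℝ (Fin n))
    (x : EuclideanSpace ℝ (Fin n)) (b : Fin n) : ∑ a, x a * L (single a 1) b = L x b := by
  conv_rhs => rw [← (basisFun (Fin n) ℝ).sum_repr x]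
  simp

end EuclideanSpace

section AngularMomentum

variable {n : ℕ} (L : EuclideanSpace ℝ (Fin n) →L[ℝ] EuclideanSpace ℝ (Fin n))

noncomputable def angularMomentumTensor (x : EuclideanSpace ℝ (Fin n)) (a b : Fin n) : ℝ :=
  (‖x‖ ^ (n + 2))⁻¹ * (x a * L x b + x b * L x a)

theorem angularMomentumTensor_comm (x : EuclideanSpace ℝ (Fin n)) (a b : Fin n) :
    angularMomentumTensor L x a b = angularMomentumTensor L x b a := by
  unfold angularMomentumTensor
  ring

variable {L}

theorem sum_angularMomentumTensor_self (hL : ∀ v, ⟪L v, v⟫ = 0) (x : EuclideanSpace ℝ (Fin n)) :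
    ∑ a, angularMomentumTensor L x a a = 0 := by
  simp only [angularMomentumTensor, ← two_mul, ← mul_sum, sum_mul_eq_inner]
  rw [real_inner_comm, hL, mul_zero, mul_zero]

theorem hasFDerivAt_angularMomentumTensor {x : EuclideanSpace ℝ (Fin n)} (hx : x ≠ 0)
    (a b : Fin n) :
    HasFDerivAt (fun y => angularMomentumTensor L y a b)
      ((‖x‖ ^ (n + 2))⁻¹ • (x a • (PiLp.proj 2 _ b ∘L L) + L x b • PiLp.proj 2 _ a
          + (x b • (PiLp.proj 2 _ a ∘L L) + L x a • PiLp.proj 2 _ b))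
        + (x a * L x b + x b * L x a) •
          ((-((n + 2 : ℕ) : ℝ) * (‖x‖ ^ (n + 2 + 2))⁻¹) • innerSL ℝ x)) x := by
  have hcoord (i : Fin n) := PiLp.hasFDerivAt_apply (𝕜 := ℝ) 2 x i
  have hL (i : Fin n) := (PiLp.hasFDerivAt_apply (𝕜 := ℝ) 2 (L x) i).comp x L.hasFDerivAt
  exact (hasFDerivAt_inv_norm_pow (n + 2) hx).mul
    (((hcoord a).mul (hL b)).add ((hcoord b).mul (hL a)))

theorem fderiv_angularMomentumTensor_apply {x : EuclideanSpace ℝ (Fin n)} (hx : x ≠ 0)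
    (a b : Fin n) (v : EuclideanSpace ℝ (Fin n)) :
    fderiv ℝ (fun y => angularMomentumTensor L y a b) x v =
      (‖x‖ ^ (n + 2))⁻¹ * (v a * L x b + x a * L v b + v b * L x a + x b * L v a)
        - (n + 2) * (‖x‖ ^ (n + 4))⁻¹ * (⟪x, v⟫ * (x a * L x b + x b * L x a)) := by
  rw [(hasFDerivAt_angularMomentumTensor hx a b).fderiv]
  simp only [add_apply, smul_apply, ContinuousLinearMap.comp_apply, PiLp.proj_apply, smul_eq_mul,
    coe_innerSL_apply, Nat.cast_add, Nat.cast_ofNat]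
  ring

theorem sum_fderiv_angularMomentumTensor_single (hL : ∀ v, ⟪L v, v⟫ = 0)
    {x : EuclideanSpace ℝ (Fin n)} (hx : x ≠ 0) (b : Fin n) :
    ∑ a, fderiv ℝ (fun y => angularMomentumTensor L y a b) x (single a 1) = 0 := by
  have hdiv : ∑ a, ((single a (1 : ℝ)) a * L x b + x a * L (single a 1) b
      + (single a (1 : ℝ)) b * L x a + x b * L (single a 1) a) = (n + 2) * L x b := by
    have htrace (a : Fin n) : L (single a 1) a = 0 := by
      simpa [inner_single_right] using hL (single a 1)
    simp only [sum_add_distrib, PiLp.single_eq_same, one_mul, sum_const, card_univ, Fintype.card_fin,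
      nsmul_eq_mul, sum_mul_apply_single, PiLp.single_apply, ite_mul, zero_mul, sum_ite_eq, mem_univ,
      if_true, htrace, mul_zero]
    ring
  have hradial : ∑ a, ⟪x, single a 1⟫ * (x a * L x b + x b * L x a) = ‖x‖ ^ 2 * L x b := by
    calc ∑ a, ⟪x, single a 1⟫ * (x a * L x b + x b * L x a)
        = (∑ a, x a * x a) * L x b + x b * ∑ a, x a * L x a := by
          rw [sum_mul, mul_sum, ← sum_add_distrib]
          refine sum_congr rfl fun a _ => ?_
          simp only [inner_single_right, conj_trivial]
          ring
      _ = ‖x‖ ^ 2 * L x b := by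
          rw [sum_mul_eq_inner, sum_mul_eq_inner, real_inner_self_eq_norm_sq, real_inner_comm, hL,
            mul_zero, add_zero]
  have hr : ‖x‖ ≠ 0 := norm_ne_zero_iff.mpr hx
  simp only [fderiv_angularMomentumTensor_apply hx, sum_sub_distrib, ← mul_sum, hdiv, hradial]
  field_simp
  ring

end AngularMomentum

noncomputable def crossCLM (J : EuclideanSpace ℝ (Fin 3)) :
    EuclideanSpace ℝ (Fin 3) →L[ℝ] EuclideanSpace ℝ (Fin 3) :=
  LinearMap.toContinuousLinearMap
    ((WithLp.linearEquiv 2 ℝ (Fin 3 → ℝ)).symm.toLinearMap ∘ₗ crossProduct J.ofLp ∘ₗ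
      (WithLp.linearEquiv 2 ℝ (Fin 3 → ℝ)).toLinearMap)

theorem crossCLM_apply (J y : EuclideanSpace ℝ (Fin 3)) (b : Fin 3) :
    crossCLM J y b = crossVec J y b := by
  fin_cases b <;> simp [crossCLM, crossVec, cross_apply]

theorem inner_crossCLM_self (J v : EuclideanSpace ℝ (Fin 3)) : ⟪crossCLM J v, v⟫ = 0 := by
  simp only [crossCLM, LinearMap.coe_toContinuousLinearMap', LinearMap.coe_comp,
    LinearEquiv.coe_coe, Function.comp_apply, WithLp.linearEquiv_apply, WithLp.linearEquiv_symm_apply,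
    inner_eq_star_dotProduct, star_trivial]
  exact dot_cross_self J.ofLp v.ofLp

theorem bowenYorkJ_eq (J x : EuclideanSpace ℝ (Fin 3)) (a b : Fin 3) :
    bowenYorkJ J x a b = 3 * angularMomentumTensor (crossCLM J) x a b := by
  rw [bowenYorkJ, angularMomentumTensor, crossCLM_apply, crossCLM_apply, div_eq_mul_inv, mul_assoc]

/-- For every `J ∈ ℝ³`, the Bowen–York angular-momentum field `S^J` on `ℝ³∖{0}` is a solution
of the Euclidean momentum constraint: for every `x ≠ 0` the matrix `S^J(x)` is symmetric,
trace-free and divergence-free. -/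
theorem stmt_12 (J : EuclideanSpace ℝ (Fin 3)) :
    ∀ x : EuclideanSpace ℝ (Fin 3), x ≠ 0 →
      (∀ a b : Fin 3, bowenYorkJ J x a b = bowenYorkJ J x b a) ∧
      (∑ a : Fin 3, bowenYorkJ J x a a) = 0 ∧
      (∀ b : Fin 3,
        ∑ a : Fin 3,
          fderiv ℝ (fun y : EuclideanSpace ℝ (Fin 3) => bowenYorkJ J y a b) x
            (EuclideanSpace.single a 1) = 0) := by
  intro x hx
  simp only [bowenYorkJ_eq]
  refine ⟨fun a b => by rw [angularMomentumTensor_comm], ?_, fun b => ?_⟩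
  · rw [← mul_sum, sum_angularMomentumTensor_self (inner_crossCLM_self J), mul_zero]
  · have hconst (a : Fin 3) :
        fderiv ℝ (fun y => 3 * angularMomentumTensor (crossCLM J) y a b) x (single a 1)
          = 3 * fderiv ℝ (fun y => angularMomentumTensor (crossCLM J) y a b) x (single a 1) := by
      rw [fderiv_const_mul (hasFDerivAt_angularMomentumTensor hx a b).differentiableAt]
      rfl
    rw [sum_congr rfl fun a _ => hconst a, ← mul_sum,
      sum_fderiv_angularMomentumTensor_single (inner_crossCLM_self J) hx, mul_zero]
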